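/- Let m, n ≥ 1 be positive integers such that m ≤ 2^r ≤ n < 2^{r+1} for some non-negative integer r. Then there exists a continuous map f : S^{n−1} → ℝ^{m+n−1} with f(−v) = −f(v) for all v ∈ S^{n−1} (for example the composition of the inclusion S^{n−1} ⊆ ℝⁿ with a linear embedding ℝⁿ ↪ ℝ^{m+n−1}) such that every finite subset X ⊆ S^{n−1} for which 0 lies in the convex hull of f(X) has diameter at least π − arccos(1/n). -/

import Mathlib

/-!
The odd map is a linear embedding `L : ℝⁿ → ℝ^{m+n-1}`, so `0 ∈ conv L(X)` forces `0 ∈ conv X`.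
By Carathéodory, `0 = ∑ wᵢ zᵢ` is a positive convex combination of `k ≤ n + 1` affinely
independent unit vectors `zᵢ ∈ X`. Expanding `‖∑ wᵢ zᵢ‖² = 0` gives
`∑_{i ≠ j} wᵢ wⱼ (⟪zᵢ, zⱼ⟫ + 1/(k-1)) = (1 - k ∑ wᵢ²)/(k-1) ≤ 0` by Cauchy–Schwarz, so some
`⟪zᵢ, zⱼ⟫ ≤ -1/(k-1) ≤ -1/n`, i.e. `d(zᵢ, zⱼ) ≥ arccos (-1/n) = π - arccos (1/n)`.
-/

open Metric RealInnerProductSpace Finset Module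

lemma Finset.sum_sum_eq_sum_add_sum_offDiag {ι M : Type*} [Fintype ι] [DecidableEq ι]
    [AddCommMonoid M] (f : ι → ι → M) :
    ∑ i, ∑ j, f i j = ∑ i, f i i + ∑ p ∈ univ.offDiag, f p.1 p.2 := by
  rw [← sum_product', ← diag_union_offDiag, sum_union (disjoint_diag_offDiag _), sum_diag]

section UnitVectors

variable {E : Type*} [NormedAddCommGroup E] [InnerProductSpace ℝ E]

lemma norm_sum_smul_sq_of_norm_eq_one {ι : Type*} [Fintype ι] [DecidableEq ι] {z : ι → E}
    (hz : ∀ i, ‖z i‖ = 1) (w : ι → ℝ) :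
    ‖∑ i, w i • z i‖ ^ 2 = ∑ i, w i ^ 2 + ∑ p ∈ univ.offDiag, w p.1 * w p.2 * ⟪z p.1, z p.2⟫ := by
  rw [← real_inner_self_eq_norm_sq, sum_inner]
  simp only [inner_sum, real_inner_smul_left, real_inner_smul_right]
  rw [sum_sum_eq_sum_add_sum_offDiag]
  congr 1
  · refine sum_congr rfl fun i _ => ?_
    rw [real_inner_self_eq_norm_sq, hz i]
    ring
  · exact sum_congr rfl fun p _ => by ring

theorem exists_inner_le_neg_inv_of_sum_smul_eq_zero {ι : Type*} [Fintype ι] [Nontrivial ι]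
    {z : ι → E} (hz : ∀ i, ‖z i‖ = 1) {w : ι → ℝ} (hw : ∀ i, 0 < w i) (hw1 : ∑ i, w i = 1)
    (hwz : ∑ i, w i • z i = 0) :
    ∃ i j, i ≠ j ∧ ⟪z i, z j⟫ ≤ -1 / ((Fintype.card ι : ℝ) - 1) := by
  classical
  set c : ℝ := (Fintype.card ι : ℝ) - 1
  have hc : 0 < c := by
    have : (1 : ℝ) < Fintype.card ι := by exact_mod_cast Fintype.one_lt_card
    linarith
  have hS : 1 ≤ (c + 1) * ∑ i, w i ^ 2 := by
    simpa [c, hw1] using sq_sum_le_card_mul_sum_sq (s := univ) (f := w)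
  have hgram := norm_sum_smul_sq_of_norm_eq_one hz w
  rw [hwz, norm_zero, sq, zero_mul] at hgram
  have hmass : (∑ i, w i) ^ 2 = ∑ i, w i ^ 2 + ∑ p ∈ univ.offDiag, w p.1 * w p.2 := by
    rw [sq, sum_mul_sum, sum_sum_eq_sum_add_sum_offDiag]
    simp only [sq]
  rw [hw1, one_pow] at hmass
  have hkey : ∑ p ∈ univ.offDiag, w p.1 * w p.2 * (⟪z p.1, z p.2⟫ + 1 / c) ≤
      ∑ _p ∈ (univ : Finset ι).offDiag, (0 : ℝ) := by
    simp only [mul_add, sum_add_distrib, ← sum_mul, sum_const_zero]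
    rw [← sub_eq_of_eq_add' hmass, eq_neg_of_add_eq_zero_right hgram.symm, mul_one_div]
    have : (1 - ∑ i, w i ^ 2) / c ≤ ∑ i, w i ^ 2 := by
      rw [div_le_iff₀ hc]
      linarith
    linarith
  obtain ⟨a, b, hab⟩ := exists_pair_ne ι
  obtain ⟨⟨i, j⟩, hij, hle⟩ :=
    exists_le_of_sum_le ⟨(a, b), mem_offDiag.2 ⟨mem_univ a, mem_univ b, hab⟩⟩ hkey
  refine ⟨i, j, (mem_offDiag.1 hij).2.2, ?_⟩
  have := nonpos_of_mul_nonpos_right hle (mul_pos (hw i) (hw j))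
  rw [neg_div]
  linarith

theorem exists_inner_le_neg_inv_finrank_of_zero_mem_convexHull [FiniteDimensional ℝ E]
    {s : Set E} (hs : s ⊆ sphere 0 1) (h0 : (0 : E) ∈ convexHull ℝ s) :
    ∃ x ∈ s, ∃ y ∈ s, ⟪x, y⟫ ≤ -1 / (finrank ℝ E : ℝ) := by
  obtain ⟨ι, _, z, w, hzs, hai, hw, hw1, hwz⟩ := eq_pos_convex_span_of_mem_convexHull h0
  have hzs' : ∀ i, z i ∈ s := fun i => hzs (Set.mem_range_self i)
  have hz : ∀ i, ‖z i‖ = 1 := fun i => mem_sphere_zero_iff_norm.1 (hs (hzs' i))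
  have : Nontrivial ι := by
    by_contra htriv
    have : Subsingleton ι := not_nontrivial_iff_subsingleton.1 htriv
    obtain ⟨i⟩ : Nonempty ι := by
      by_contra hempty
      have : IsEmpty ι := not_nonempty_iff.1 hempty
      simp at hw1
    rw [Fintype.sum_subsingleton _ i] at hw1 hwz
    have hzi : z i = 0 := by simpa [hw1] using hwz
    simpa [hzi] using hz i
  obtain ⟨i, j, -, hij⟩ := exists_inner_le_neg_inv_of_sum_smul_eq_zero hz hw hw1 hwz
  refine ⟨z i, hzs' i, z j, hzs' j, hij.trans ?_⟩
  have hcard : Fintype.card ι ≤ finrank ℝ E + 1 :=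
    hai.card_le_finrank_succ.trans (Nat.add_le_add_right (Submodule.finrank_le _) 1)
  have hc : (0 : ℝ) < (Fintype.card ι : ℝ) - 1 := by
    have : (1 : ℝ) < Fintype.card ι := by exact_mod_cast Fintype.one_lt_card
    linarith
  have hcE : (Fintype.card ι : ℝ) - 1 ≤ finrank ℝ E := by
    have : (Fintype.card ι : ℝ) ≤ finrank ℝ E + 1 := by exact_mod_cast hcard
    linarith
  simp only [neg_div, neg_le_neg_iff]
  exact one_div_le_one_div_of_le hc hcE

end UnitVectors

noncomputable def EuclideanSpace.extendByZero {k l : ℕ} (h : k ≤ l) :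
    EuclideanSpace ℝ (Fin k) →ₗ[ℝ] EuclideanSpace ℝ (Fin l) :=
  (WithLp.linearEquiv 2 ℝ (Fin l → ℝ)).symm.toLinearMap ∘ₗ
    Function.ExtendByZero.linearMap ℝ (Fin.castLE h) ∘ₗ
    (WithLp.linearEquiv 2 ℝ (Fin k → ℝ)).toLinearMap

lemma EuclideanSpace.extendByZero_injective {k l : ℕ} (h : k ≤ l) :
    Function.Injective (extendByZero h) :=
  (WithLp.linearEquiv 2 ℝ (Fin l → ℝ)).symm.injective.comp <|
    (Function.extend_injective (Fin.castLE_injective h) 0).comp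
      (WithLp.linearEquiv 2 ℝ (Fin k → ℝ)).injective

lemma pi_sub_arccos_le_arccos_of_le_neg {x y : ℝ} (h : y ≤ -x) :
    Real.pi - Real.arccos x ≤ Real.arccos y := by
  rw [← Real.arccos_neg]
  exact Real.arccos_le_arccos h

theorem stmt8 (m n : ℕ) (hm : 1 ≤ m) :
    ∃ f : EuclideanSpace ℝ (Fin n) → EuclideanSpace ℝ (Fin (m + n - 1)),
      ContinuousOn f (sphere 0 1) ∧
      (∀ v ∈ sphere (0 : EuclideanSpace ℝ (Fin n)) 1, f (-v) = -f v) ∧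
      ∀ X : Finset (EuclideanSpace ℝ (Fin n)),
        ↑X ⊆ sphere (0 : EuclideanSpace ℝ (Fin n)) 1 →
        (0 : EuclideanSpace ℝ (Fin (m + n - 1))) ∈ convexHull ℝ (f '' ↑X) →
        ∃ x ∈ X, ∃ y ∈ X,
          Real.pi - Real.arccos (1 / n) ≤ Real.arccos ⟪x, y⟫ := by
  have hle : n ≤ m + n - 1 := by omega
  set L := EuclideanSpace.extendByZero hle
  refine ⟨L, L.continuous_of_finiteDimensional.continuousOn, fun v _ => map_neg L v,
    fun X hX h0 => ?_⟩
  rw [← L.image_convexHull] at h0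
  obtain ⟨y₀, hy₀, hLy₀⟩ := h0
  rw [(injective_iff_map_eq_zero L).1 (EuclideanSpace.extendByZero_injective hle) y₀ hLy₀] at hy₀
  obtain ⟨x, hx, y, hy, hxy⟩ := exists_inner_le_neg_inv_finrank_of_zero_mem_convexHull hX hy₀
  rw [finrank_euclideanSpace_fin, neg_div] at hxy
  exact ⟨x, hx, y, hy, pi_sub_arccos_le_arccos_of_le_neg hxy⟩
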